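/- Let (X, μ) and (Y, ν) be standard probability spaces. The set of measurable real-valued functions on X × Y is complete with respect to the metric τ: if a sequence {f_n} of measurable functions on X × Y is Cauchy in τ, then there exists a measurable function f₀ on X × Y such that τ(f_n, f₀) → 0. -/

import Mathlib

open MeasureTheory Set
open scoped ENNReal

namespace VirtCont

variable {X Y : Type*}

/-- A semimetric on a set `S`. -/
def IsSemimetricOn (ρ : X → X → ℝ) (S : Set X) : Prop :=
  (∀ x ∈ S, ∀ y ∈ S, 0 ≤ ρ x y) ∧ (∀ x ∈ S, ρ x x = 0) ∧
  (∀ x ∈ S, ∀ y ∈ S, ρ x y = ρ y x) ∧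
  (∀ x ∈ S, ∀ y ∈ S, ∀ z ∈ S, ρ x z ≤ ρ x y + ρ y z)

/-- Separability of the semimetric space `(S, ρ)`. -/
def SepOn (ρ : X → X → ℝ) (S : Set X) : Prop :=
  ∃ D : Set X, D ⊆ S ∧ D.Countable ∧ ∀ x ∈ S, ∀ ε : ℝ, 0 < ε → ∃ d ∈ D, ρ x d < ε

/-- An admissible semimetric on `(S, μ|_S)`: a semimetric on `S`, measurable as a function
of two variables, for which some subset of `S` of full measure in `S` is separable. -/
def IsAdmissibleSemimetricOn [MeasurableSpace X] (μ : Measure X) (S : Set X)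
    (ρ : X → X → ℝ) : Prop :=
  IsSemimetricOn ρ S ∧
  Measurable (fun p : S × S => ρ (p.1 : X) (p.2 : X)) ∧
  ∃ X₀ : Set X, X₀ ⊆ S ∧ MeasurableSet X₀ ∧ μ (S \ X₀) = 0 ∧ SepOn ρ X₀

/-- An admissible semimetric on the whole space `(X, μ)`. -/
def IsAdmissibleSemimetric [MeasurableSpace X] (μ : Measure X) (ρ : X → X → ℝ) : Prop :=
  IsSemimetricOn ρ univ ∧
  Measurable (fun p : X × X => ρ p.1 p.2) ∧
  ∃ X₀ : Set X, MeasurableSet X₀ ∧ μ X₀ = 1 ∧ SepOn ρ X₀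

/-- An admissible metric on `(X, μ)`. -/
def IsAdmissibleMetric [MeasurableSpace X] (μ : Measure X) (ρ : X → X → ℝ) : Prop :=
  IsAdmissibleSemimetric μ ρ ∧ ∀ x y : X, ρ x y = 0 → x = y

/-- Continuity of `f` on `A ×ˢ B` with respect to the product of the (semi)metric
topologies of `ρX` and `ρY`. -/
def ContOnProd (ρX : X → X → ℝ) (ρY : Y → Y → ℝ) (A : Set X) (B : Set Y)
    (f : X × Y → ℝ) : Prop :=
  ∀ x ∈ A, ∀ y ∈ B, ∀ ε : ℝ, 0 < ε → ∃ δ : ℝ, 0 < δ ∧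
    ∀ x' ∈ A, ∀ y' ∈ B, ρX x x' < δ → ρY y y' < δ → |f (x, y) - f (x', y')| < ε

variable [MeasurableSpace X] [MeasurableSpace Y]

/-- A properly virtually continuous function of two variables. -/
def ProperlyVirtuallyContinuous (μ : Measure X) (ν : Measure Y) (f : X × Y → ℝ) : Prop :=
  Measurable f ∧
  ∀ ε : ℝ, 0 < ε → ∃ (X' : Set X) (Y' : Set Y),
    MeasurableSet X' ∧ MeasurableSet Y' ∧
    1 - ENNReal.ofReal ε ≤ μ X' ∧ 1 - ENNReal.ofReal ε ≤ ν Y' ∧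
    ∃ ρX : X → X → ℝ, ∃ ρY : Y → Y → ℝ,
      IsAdmissibleSemimetricOn μ X' ρX ∧ IsAdmissibleSemimetricOn ν Y' ρY ∧
      ContOnProd ρX ρY X' Y' f

/-- A virtually continuous function: one which agrees almost everywhere with a
properly virtually continuous function. -/
def VirtuallyContinuous (μ : Measure X) (ν : Measure Y) (f : X × Y → ℝ) : Prop :=
  Measurable f ∧ ∃ g : X × Y → ℝ,
    ProperlyVirtuallyContinuous μ ν g ∧ f =ᵐ[μ.prod ν] g

/-- A virtually open subset of a product of measure spaces. -/
def VirtuallyOpen (μ : Measure X) (ν : Measure Y) (Z : Set (X × Y)) : Prop :=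
  ∃ (X' : Set X) (Y' : Set Y), MeasurableSet X' ∧ MeasurableSet Y' ∧
    μ X' = 1 ∧ ν Y' = 1 ∧
    ∃ (A : ℕ → Set X) (B : ℕ → Set Y),
      (∀ n, MeasurableSet (A n)) ∧ (∀ n, MeasurableSet (B n)) ∧
      Z ∩ (X' ×ˢ Y') = ⋃ n, (A n) ×ˢ (B n)

/-- A virtually closed subset of a product of measure spaces. -/
def VirtuallyClosed (μ : Measure X) (ν : Measure Y) (Z : Set (X × Y)) : Prop :=
  VirtuallyOpen μ ν Zᶜ

/-- Proper thickness of a subset of a product of measure spaces. -/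
noncomputable def sthi (μ : Measure X) (ν : Measure Y) (Z : Set (X × Y)) : ℝ≥0∞ :=
  ⨅ (A : Set X) (B : Set Y) (_ : MeasurableSet A) (_ : MeasurableSet B)
    (_ : Z ⊆ (A ×ˢ (univ : Set Y)) ∪ ((univ : Set X) ×ˢ B)), μ A + ν B

/-- Thickness of a subset of a product of measure spaces. -/
noncomputable def thi (μ : Measure X) (ν : Measure Y) (Z : Set (X × Y)) : ℝ≥0∞ :=
  ⨅ (A : Set X) (B : Set Y) (_ : MeasurableSet A) (_ : MeasurableSet B)
    (_ : (μ.prod ν) (Z \ ((A ×ˢ (univ : Set Y)) ∪ ((univ : Set X) ×ˢ B))) = 0), μ A + ν B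

/-- The distance `τ` between two measurable functions on a product space. -/
noncomputable def tauDist (μ : Measure X) (ν : Measure Y) (f g : X × Y → ℝ) : ℝ :=
  sInf {ε : ℝ | 0 < ε ∧ thi μ ν {p : X × Y | ε < |f p - g p|} ≤ ENNReal.ofReal ε}

/-- The `SR¹`-norm of a measurable function on a product space. -/
noncomputable def srNorm (μ : Measure X) (ν : Measure Y) (f : X × Y → ℝ) : ℝ≥0∞ :=
  ⨅ (a : X → ℝ) (b : Y → ℝ) (_ : Measurable a) (_ : Measurable b)
    (_ : ∀ x, 0 ≤ a x) (_ : ∀ y, 0 ≤ b y)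
    (_ : ∀ᵐ p ∂μ.prod ν, |f p| ≤ a p.1 + b p.2),
    (∫⁻ x, ENNReal.ofReal (a x) ∂μ) + (∫⁻ y, ENNReal.ofReal (b y) ∂ν)


section Helpers

variable (μ : Measure X) (ν : Measure Y)

lemma thi_le_cover {Z : Set (X × Y)} {A : Set X} {B : Set Y}
    (hA : MeasurableSet A) (hB : MeasurableSet B)
    (h0 : (μ.prod ν) (Z \ ((A ×ˢ (univ : Set Y)) ∪ ((univ : Set X) ×ˢ B))) = 0) :
    thi μ ν Z ≤ μ A + ν B :=
  iInf_le_of_le A <| iInf_le_of_le B <| iInf_le_of_le hA <| iInf_le_of_le hB <|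
    iInf_le _ h0

lemma thi_le_one [IsProbabilityMeasure μ] (Z : Set (X × Y)) : thi μ ν Z ≤ 1 := by
  simpa using thi_le_cover μ ν (Z := Z) MeasurableSet.univ MeasurableSet.empty (by simp)

lemma thi_mono {Z Z' : Set (X × Y)} (h : Z ⊆ Z') : thi μ ν Z ≤ thi μ ν Z' := by
  refine le_iInf fun A => le_iInf fun B => le_iInf fun hA => le_iInf fun hB => le_iInf fun h0 => ?_
  exact thi_le_cover μ ν hA hB (measure_mono_null (diff_subset_diff_left h) h0)

lemma exists_cover_of_thi_lt {Z : Set (X × Y)} {c : ℝ≥0∞} (h : thi μ ν Z < c) :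
    ∃ A B, MeasurableSet A ∧ MeasurableSet B ∧
      (μ.prod ν) (Z \ ((A ×ˢ (univ : Set Y)) ∪ ((univ : Set X) ×ˢ B))) = 0 ∧ μ A + ν B < c := by
  simp only [thi, iInf_lt_iff] at h
  obtain ⟨A, B, hA, hB, h0, hle⟩ := h
  exact ⟨A, B, hA, hB, h0, hle⟩

lemma thi_union_le [IsProbabilityMeasure μ] [IsProbabilityMeasure ν] (Z₁ Z₂ : Set (X × Y)) :
    thi μ ν (Z₁ ∪ Z₂) ≤ thi μ ν Z₁ + thi μ ν Z₂ := by
  refine ENNReal.le_of_forall_pos_le_add fun ε hε _ => ?_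
  have hfin : ∀ Z : Set (X × Y), thi μ ν Z < thi μ ν Z + ε / 2 := fun Z =>
    ENNReal.lt_add_right (lt_of_le_of_lt (thi_le_one μ ν Z) ENNReal.one_lt_top).ne
      (ENNReal.half_pos (by exact_mod_cast hε.ne')).ne'
  obtain ⟨A₁, B₁, hA₁, hB₁, h01, hle1⟩ := exists_cover_of_thi_lt μ ν (hfin Z₁)
  obtain ⟨A₂, B₂, hA₂, hB₂, h02, hle2⟩ := exists_cover_of_thi_lt μ ν (hfin Z₂)
  have hsub : ∀ (A : Set X) (B : Set Y), A ⊆ A₁ ∪ A₂ → B ⊆ B₁ ∪ B₂ →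
      (A ×ˢ (univ : Set Y)) ∪ ((univ : Set X) ×ˢ B) ⊆
      (((A₁ ∪ A₂) ×ˢ (univ : Set Y)) ∪ ((univ : Set X) ×ˢ (B₁ ∪ B₂))) := fun A B hA hB =>
    union_subset_union (prod_mono hA subset_rfl) (prod_mono subset_rfl hB)
  have hcov : (μ.prod ν) ((Z₁ ∪ Z₂) \
      (((A₁ ∪ A₂) ×ˢ (univ : Set Y)) ∪ ((univ : Set X) ×ˢ (B₁ ∪ B₂)))) = 0 := by
    refine measure_mono_null ?_ (measure_union_null h01 h02)
    intro p hp
    rcases hp.1 with h | h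
    · exact Or.inl ⟨h, fun hc => hp.2 (hsub A₁ B₁ subset_union_left subset_union_left hc)⟩
    · exact Or.inr ⟨h, fun hc => hp.2 (hsub A₂ B₂ subset_union_right subset_union_right hc)⟩
  calc thi μ ν (Z₁ ∪ Z₂) ≤ μ (A₁ ∪ A₂) + ν (B₁ ∪ B₂) :=
        thi_le_cover μ ν (hA₁.union hA₂) (hB₁.union hB₂) hcov
    _ ≤ (μ A₁ + ν B₁) + (μ A₂ + ν B₂) := by
        have := measure_union_le (μ := μ) A₁ A₂
        have := measure_union_le (μ := ν) B₁ B₂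
        calc μ (A₁ ∪ A₂) + ν (B₁ ∪ B₂) ≤ (μ A₁ + μ A₂) + (ν B₁ + ν B₂) :=
              add_le_add (measure_union_le _ _) (measure_union_le _ _)
          _ = (μ A₁ + ν B₁) + (μ A₂ + ν B₂) := by ring
    _ ≤ (thi μ ν Z₁ + ε / 2) + (thi μ ν Z₂ + ε / 2) := add_le_add hle1.le hle2.le
    _ = thi μ ν Z₁ + thi μ ν Z₂ + ((ε : ℝ≥0∞)/2 + (ε : ℝ≥0∞)/2) := by ring
    _ = thi μ ν Z₁ + thi μ ν Z₂ + ε := by rw [ENNReal.add_halves]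



section TauLemmas
variable [IsProbabilityMeasure μ] [IsProbabilityMeasure ν]

lemma one_mem_tauSet (f g : X × Y → ℝ) :
    (1:ℝ) ∈ {ε : ℝ | 0 < ε ∧ thi μ ν {p : X × Y | ε < |f p - g p|} ≤ ENNReal.ofReal ε} :=
  ⟨one_pos, by simpa using thi_le_one μ ν _⟩

lemma tauSet_upward {f g : X × Y → ℝ} {a b : ℝ}
    (ha : a ∈ {ε : ℝ | 0 < ε ∧ thi μ ν {p : X × Y | ε < |f p - g p|} ≤ ENNReal.ofReal ε})
    (hab : a ≤ b) :
    b ∈ {ε : ℝ | 0 < ε ∧ thi μ ν {p : X × Y | ε < |f p - g p|} ≤ ENNReal.ofReal ε} :=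
  ⟨lt_of_lt_of_le ha.1 hab,
    (thi_mono μ ν (fun p hp => lt_of_le_of_lt hab hp)).trans
      (ha.2.trans (ENNReal.ofReal_le_ofReal hab))⟩

lemma tauDist_le_of_mem {f g : X × Y → ℝ} {a : ℝ}
    (ha : a ∈ {ε : ℝ | 0 < ε ∧ thi μ ν {p : X × Y | ε < |f p - g p|} ≤ ENNReal.ofReal ε}) :
    tauDist μ ν f g ≤ a :=
  csInf_le ⟨0, fun x hx => hx.1.le⟩ ha

lemma exists_tauSet_lt {f g : X × Y → ℝ} {c : ℝ} (h : tauDist μ ν f g < c) :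
    ∃ a ∈ {ε : ℝ | 0 < ε ∧ thi μ ν {p : X × Y | ε < |f p - g p|} ≤ ENNReal.ofReal ε}, a < c :=
  exists_lt_of_csInf_lt ⟨1, one_mem_tauSet μ ν f g⟩ h

lemma tauDist_nonneg (f g : X × Y → ℝ) : 0 ≤ tauDist μ ν f g :=
  le_csInf ⟨1, one_mem_tauSet μ ν f g⟩ fun x hx => hx.1.le

lemma tauSet_add {f g h : X × Y → ℝ} {a b : ℝ}
    (ha : a ∈ {ε : ℝ | 0 < ε ∧ thi μ ν {p : X × Y | ε < |f p - g p|} ≤ ENNReal.ofReal ε})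
    (hb : b ∈ {ε : ℝ | 0 < ε ∧ thi μ ν {p : X × Y | ε < |g p - h p|} ≤ ENNReal.ofReal ε}) :
    a + b ∈ {ε : ℝ | 0 < ε ∧ thi μ ν {p : X × Y | ε < |f p - h p|} ≤ ENNReal.ofReal ε} := by
  refine ⟨add_pos ha.1 hb.1, ?_⟩
  have hsub : {p : X × Y | a + b < |f p - h p|} ⊆
      {p : X × Y | a < |f p - g p|} ∪ {p : X × Y | b < |g p - h p|} := by
    intro p hp
    by_contra hc
    simp only [mem_union, mem_setOf_eq, not_or, not_lt] at hc
    have : |f p - h p| ≤ a + b := by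
      calc |f p - h p| ≤ |f p - g p| + |g p - h p| := abs_sub_le _ _ _
        _ ≤ a + b := add_le_add hc.1 hc.2
    exact absurd (show a + b < |f p - h p| from hp) this.not_gt
  calc thi μ ν {p : X × Y | a + b < |f p - h p|}
      ≤ thi μ ν ({p : X × Y | a < |f p - g p|} ∪ {p : X × Y | b < |g p - h p|}) :=
        thi_mono μ ν hsub
    _ ≤ thi μ ν {p : X × Y | a < |f p - g p|} + thi μ ν {p : X × Y | b < |g p - h p|} :=
        thi_union_le μ ν _ _
    _ ≤ ENNReal.ofReal a + ENNReal.ofReal b := add_le_add ha.2 hb.2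
    _ = ENNReal.ofReal (a + b) := (ENNReal.ofReal_add ha.1.le hb.1.le).symm


end TauLemmas
end Helpers

/-- the space of measurable functions on `X × Y` is complete in the
`τ`-metric: every `τ`-Cauchy sequence of measurable functions `τ`-converges to a
measurable function. -/
theorem tau_complete
    [StandardBorelSpace X] [StandardBorelSpace Y]
    (μ : Measure X) (ν : Measure Y)
    [IsProbabilityMeasure μ] [IsProbabilityMeasure ν] [NullSingletonClass μ] [NullSingletonClass ν]
    (f : ℕ → X × Y → ℝ) (hmeas : ∀ n, Measurable (f n))
    (hcauchy : ∀ ε : ℝ, 0 < ε → ∃ N : ℕ, ∀ m ≥ N, ∀ n ≥ N, tauDist μ ν (f m) (f n) < ε) :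
    ∃ f₀ : X × Y → ℝ, Measurable f₀ ∧
      Filter.Tendsto (fun n => tauDist μ ν (f n) f₀) Filter.atTop (nhds 0) := by
  classical
  have hc : ∀ k : ℕ, ∃ N : ℕ, ∀ m' ≥ N, ∀ n ≥ N, tauDist μ ν (f m') (f n) < (1/2:ℝ)^k :=
    fun k => hcauchy _ (by positivity)
  choose N hN using hc
  set m : ℕ → ℕ := fun k => k + ∑ j ∈ Finset.range (k+1), N j with hm
  have hmN : ∀ k, N k ≤ m k := fun k =>
    le_add_left (Finset.single_le_sum (f := N) (fun _ _ => Nat.zero_le _)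
      (Finset.self_mem_range_succ k))
  have hmmono : Monotone m := fun a b hab =>
    add_le_add hab (Finset.sum_le_sum_of_subset (Finset.range_subset_range.mpr (by omega)))
  have hstep : ∀ k, tauDist μ ν (f (m k)) (f (m (k+1))) < (1/2:ℝ)^k :=
    fun k => hN k _ (hmN k) _ (le_trans (hmN k) (hmmono (Nat.le_succ k)))
  have hstepS : ∀ k, ((1/2:ℝ)^k) ∈ {ε : ℝ | 0 < ε ∧
      thi μ ν {p : X × Y | ε < |f (m k) p - f (m (k+1)) p|} ≤ ENNReal.ofReal ε} := by
    intro k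
    obtain ⟨a, haS, halt⟩ := exists_tauSet_lt μ ν (hstep k)
    exact tauSet_upward μ ν haS halt.le
  have hcover : ∀ k, ∃ (A : Set X) (B : Set Y), MeasurableSet A ∧ MeasurableSet B ∧
      (μ.prod ν) ({p : X × Y | (1/2:ℝ)^k < |f (m k) p - f (m (k+1)) p|} \
        ((A ×ˢ (univ : Set Y)) ∪ ((univ : Set X) ×ˢ B))) = 0 ∧
      μ A + ν B ≤ ENNReal.ofReal (2 * (1/2:ℝ)^k) := by
    intro k
    have hlt : thi μ ν {p : X × Y | (1/2:ℝ)^k < |f (m k) p - f (m (k+1)) p|} <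
        ENNReal.ofReal (2 * (1/2:ℝ)^k) := by
      refine lt_of_le_of_lt (hstepS k).2 (ENNReal.ofReal_lt_ofReal_iff (by positivity) |>.2 ?_)
      nlinarith [pow_pos (by norm_num : (0:ℝ) < 1/2) k]
    obtain ⟨A, B, hA, hB, h0, hle⟩ := exists_cover_of_thi_lt μ ν hlt
    exact ⟨A, B, hA, hB, h0, hle.le⟩
  choose A B hA hB hnull hsum using hcover
  set Ebad : Set (X × Y) := ⋃ k, ({p : X × Y | (1/2:ℝ)^k < |f (m k) p - f (m (k+1)) p|} \
    ((A k ×ˢ (univ : Set Y)) ∪ ((univ : Set X) ×ˢ B k))) with hEbaddef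
  have hEbad : (μ.prod ν) Ebad = 0 := measure_iUnion_null hnull
  set f₀ : X × Y → ℝ := fun p => Filter.limsup (fun k => f (m k) p) Filter.atTop with hf₀def
  have hf₀ : Measurable f₀ := Measurable.limsup (fun k => hmeas (m k))
  refine ⟨f₀, hf₀, ?_⟩
  have keyS : ∀ K : ℕ, (4 * (1/2:ℝ)^K) ∈ {ε : ℝ | 0 < ε ∧
      thi μ ν {p : X × Y | ε < |f (m K) p - f₀ p|} ≤ ENNReal.ofReal ε} := by
    intro K
    refine ⟨by positivity, ?_⟩
    set A' : Set X := ⋃ j, A (K + j) with hA'def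
    set B' : Set Y := ⋃ j, B (K + j) with hB'def
    have hpt : ∀ p : X × Y, p ∉ Ebad → p ∉ ((A' ×ˢ (univ : Set Y)) ∪ ((univ : Set X) ×ˢ B')) →
        |f (m K) p - f₀ p| ≤ 2 * (1/2:ℝ)^K := by
      intro p hpE hpC
      have hnZ : ∀ j : ℕ, |f (m (K + j)) p - f (m (K + j + 1)) p| ≤ (1/2:ℝ)^(K+j) := by
        intro j
        have hpCj : p ∉ ((A (K+j) ×ˢ (univ : Set Y)) ∪ ((univ : Set X) ×ˢ B (K+j))) := by
          intro hc
          refine hpC ?_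
          rcases hc with hc | hc
          · exact Or.inl ⟨mem_iUnion.2 ⟨j, hc.1⟩, trivial⟩
          · exact Or.inr ⟨trivial, mem_iUnion.2 ⟨j, hc.2⟩⟩
        by_contra hcon
        push_neg at hcon
        exact hpE (mem_iUnion.2 ⟨K + j, ⟨hcon, hpCj⟩⟩)
      set u : ℕ → ℝ := fun j => f (m (K + j)) p with hudef
      have hd : ∀ j, dist (u j) (u (j+1)) ≤ (1/2:ℝ)^K * (1/2:ℝ)^j := by
        intro j
        rw [Real.dist_eq, ← pow_add]
        exact hnZ j
      have hcau : CauchySeq u := cauchySeq_of_le_geometric (1/2) ((1/2:ℝ)^K) (by norm_num) hd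
      obtain ⟨L, hL⟩ := cauchySeq_tendsto_of_complete hcau
      have hL' : Filter.Tendsto (fun k => f (m k) p) Filter.atTop (nhds L) := by
        have : Filter.Tendsto (fun j => f (m (j + K)) p) Filter.atTop (nhds L) := by
          refine hL.congr fun j => ?_
          simp [hudef, Nat.add_comm]
        exact (Filter.tendsto_add_atTop_iff_nat K).mp this
      have hf₀p : f₀ p = L := hL'.limsup_eq
      have hd0 : dist (u 0) L ≤ ((1/2:ℝ)^K) / (1 - 1/2) :=
        dist_le_of_le_geometric_of_tendsto₀ (1/2) ((1/2:ℝ)^K) (by norm_num) hd hL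
      have : dist (f (m K) p) L ≤ 2 * (1/2:ℝ)^K := by
        have hu0 : u 0 = f (m K) p := by simp [hudef]
        rw [← hu0]
        calc dist (u 0) L ≤ ((1/2:ℝ)^K) / (1 - 1/2) := hd0
          _ = 2 * (1/2:ℝ)^K := by ring
      rw [hf₀p, ← Real.dist_eq]
      exact this
    have hsubZ : {p : X × Y | 4 * (1/2:ℝ)^K < |f (m K) p - f₀ p|} \
        ((A' ×ˢ (univ : Set Y)) ∪ ((univ : Set X) ×ˢ B')) ⊆ Ebad := by
      intro p hp
      by_contra hpE
      have := hpt p hpE hp.2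
      have h4 : 4 * (1/2:ℝ)^K < |f (m K) p - f₀ p| := hp.1
      nlinarith [pow_pos (by norm_num : (0:ℝ) < 1/2) K]
    have hmesA' : MeasurableSet A' := MeasurableSet.iUnion fun j => hA (K + j)
    have hmesB' : MeasurableSet B' := MeasurableSet.iUnion fun j => hB (K + j)
    have hnull' : (μ.prod ν) ({p : X × Y | 4 * (1/2:ℝ)^K < |f (m K) p - f₀ p|} \
        ((A' ×ˢ (univ : Set Y)) ∪ ((univ : Set X) ×ˢ B'))) = 0 :=
      measure_mono_null hsubZ hEbad
    refine (thi_le_cover μ ν hmesA' hmesB' hnull').trans ?_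
    have hsumA : μ A' ≤ ∑' j, μ (A (K + j)) := measure_iUnion_le _
    have hsumB : ν B' ≤ ∑' j, ν (B (K + j)) := measure_iUnion_le _
    have htsum : ∑' j : ℕ, (μ (A (K + j)) + ν (B (K + j))) ≤
        ENNReal.ofReal (4 * (1/2:ℝ)^K) := by
      have hle : ∀ j : ℕ, μ (A (K + j)) + ν (B (K + j)) ≤
          ENNReal.ofReal ((2 * (1/2:ℝ)^K) * (1/2:ℝ)^j) := by
        intro j
        refine (hsum (K + j)).trans (le_of_eq ?_)
        rw [pow_add]
        ring_nf
      refine (ENNReal.tsum_le_tsum hle).trans (le_of_eq ?_)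
      rw [← ENNReal.ofReal_tsum_of_nonneg (fun j => by positivity)
        ((summable_geometric_of_lt_one (by norm_num) (by norm_num)).mul_left _)]
      congr 1
      rw [tsum_mul_left, tsum_geometric_of_lt_one (by norm_num) (by norm_num)]
      ring
    calc μ A' + ν B' ≤ (∑' j, μ (A (K + j))) + ∑' j, ν (B (K + j)) := add_le_add hsumA hsumB
      _ = ∑' j : ℕ, (μ (A (K + j)) + ν (B (K + j))) := (ENNReal.tsum_add).symm
      _ ≤ ENNReal.ofReal (4 * (1/2:ℝ)^K) := htsum
  rw [Metric.tendsto_atTop]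
  intro ε hε
  obtain ⟨K, hK⟩ : ∃ K : ℕ, (1/2:ℝ)^K < ε/5 :=
    exists_pow_lt_of_lt_one (by positivity) (by norm_num)
  refine ⟨N K, fun n hn => ?_⟩
  have h1 : tauDist μ ν (f n) (f (m K)) < (1/2:ℝ)^K := hN K n hn (m K) (hmN K)
  obtain ⟨a, haS, halt⟩ := exists_tauSet_lt μ ν h1
  have h2 := tauSet_add μ ν haS (keyS K)
  have h3 : tauDist μ ν (f n) f₀ ≤ a + 4 * (1/2:ℝ)^K := tauDist_le_of_mem μ ν h2
  rw [Real.dist_0_eq_abs, abs_of_nonneg (tauDist_nonneg μ ν _ _)]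
  nlinarith [pow_pos (by norm_num : (0:ℝ) < 1/2) K]




end VirtCont
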